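/- arXiv:2208.07226 — 3 statements merged into one kernel-verified Lean document; each statement's English description precedes it below -/
import Mathlib

section
/- Let g, r, c be positive integers with c < r, g - 1 ≥ max(r²/c, r + 1), and set s = ⌊((g-1)c² + 1)/r⌋. Assume r > ((g-1)c² - rs) + 1 (equivalently r > v²/2 + 1 where v² = 2(g-1)c² - 2rs). Then for every integer y with 0 < y ≤ c there is no integer x satisfying r·y/c < x < (y²(g-1) + 1)/(s·y/c), i.e. the open interval (ry/c, c(y²(g-1)+1)/(sy)) contains no integer. -/
/-- Key quadratic inequality: for `1 ≤ y ≤ c` and `c+1 ≤ r`,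
`r*c*y - (r-2)*y^2 ≥ c^2`. -/
lemma stmt_1_aux (r c y : ℤ) (h1 : 1 ≤ y) (h2 : y ≤ c) (h3 : c + 1 ≤ r) :
    c^2 ≤ r*c*y - (r-2)*y^2 := by
  rcases eq_or_lt_of_le (show (1:ℤ) ≤ c by linarith) with hc1 | hc1
  · have hy1 : y = 1 := le_antisymm (hc1 ▸ h2) h1
    subst hy1
    nlinarith
  · -- multiply by (c-1) > 0 and use the identity
    have key : (c-1)*(r*c*y-(r-2)*y^2-c^2)
        = (r-2)*(y-1)*(c-y)*(c-1)+(c-y)*((c-1)*(r-c-1)+1)+(y-1)*c^2 := by ring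
    have h4 : 0 ≤ (r-2)*(y-1)*(c-y)*(c-1) := by
      apply mul_nonneg
      apply mul_nonneg
      apply mul_nonneg <;> linarith
      all_goals linarith
    have h5 : 0 ≤ (c-y)*((c-1)*(r-c-1)+1) := by
      apply mul_nonneg
      · linarith
      · nlinarith
    have h6 : 0 ≤ (y-1)*c^2 := mul_nonneg (by linarith) (sq_nonneg c)
    have h7 : 0 ≤ (c-1)*(r*c*y-(r-2)*y^2-c^2) := by rw [key]; linarith
    nlinarith [h7]

/-- Numerical core of Lemma 4.2(ii): with `s = ⌊((g-1)c²+1)/r⌋` and the stated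
hypotheses, for every integer `0 < y ≤ c` the open interval
`(ry/c, (y²(g-1)+1)/(sy/c))` contains no integer. -/
theorem stmt_1 (g r c s : ℤ) (hg : 0 < g) (hr : 0 < r) (hc : 0 < c)
    (hcr : c < r)
    (hmax1 : ((r : ℝ)^2 / c) ≤ (g - 1 : ℝ))
    (hmax2 : r + 1 ≤ g - 1)
    (hs : s = ((g - 1) * c^2 + 1) / r)
    (hv : (g - 1) * c^2 - r * s + 1 < r) :
    ∀ y : ℤ, 0 < y → y ≤ c →
      ¬ ∃ x : ℤ, (r : ℝ) * y / c < x ∧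
        (x : ℝ) < ((y : ℝ)^2 * (g - 1) + 1) / ((s : ℝ) * y / c) := by
  intro y hy hyc
  rintro ⟨x, hx1, hx2⟩
  set n : ℤ := (g - 1) * c^2 + 1 with hn
  have hmod1 : 0 ≤ n % r := Int.emod_nonneg n hr.ne'
  have hmod2 : n % r < r := Int.emod_lt_of_pos n hr
  have hdiv : r * (n / r) + n % r = n := Int.mul_ediv_add_emod n r
  set t : ℤ := n % r with ht
  have hrs : r * s = n - t := by rw [hs]; linarith
  -- (g-1)*c ≥ r^2
  have hgcR : (r:ℝ)^2 ≤ ((g:ℝ) - 1) * c := by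
    rw [div_le_iff₀ (by exact_mod_cast hc)] at hmax1
    linarith
  have hgc : r^2 ≤ (g - 1) * c := by exact_mod_cast hgcR
  -- s ≥ r*c
  have hgc2 : r^2 * c ≤ (g-1) * c * c :=
    mul_le_mul_of_nonneg_right hgc hc.le
  have h2 : r * (r*c - 1) < r * s := by nlinarith [hrs, hmod2, hgc2, hc]
  have hs_ge : r * c ≤ s := by
    have h3 : r*c - 1 < s := lt_of_mul_lt_mul_left h2 hr.le
    linarith
  have hspos : 0 < s := by nlinarith
  have hsy : 0 < s * y := mul_pos hspos hy
  -- real facts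
  have hcR : (0:ℝ) < (c:ℝ) := by exact_mod_cast hc
  have hsyR : (0:ℝ) < (s:ℝ) * y / c := by
    apply div_pos _ hcR
    exact_mod_cast hsy
  -- from hx1 : r*y < c*x
  have hx1' : r * y + 1 ≤ c * x := by
    have : (r:ℝ) * y < (x:ℝ) * c := by
      rw [div_lt_iff₀ hcR] at hx1
      linarith
    have : r * y < x * c := by exact_mod_cast this
    linarith
  -- from hx2 : x * s * y < c * (y^2*(g-1) + 1)
  have hx2' : x * (s * y) < c * (y^2 * (g-1) + 1) := by
    rw [lt_div_iff₀ hsyR] at hx2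
    have h := mul_lt_mul_of_pos_right hx2 hcR
    have hEq : (x:ℝ) * ((s:ℝ) * y / c) * c = (x:ℝ) * ((s:ℝ)*(y:ℝ)) := by
      field_simp
    rw [hEq] at h
    have h2 : (x:ℝ) * ((s:ℝ)*(y:ℝ)) < (c:ℝ) * ((y:ℝ)^2*((g:ℝ)-1)+1) := by linarith
    exact_mod_cast h2
  -- key inequality
  have hkey : c^2 * (y^2 * (g-1) + 1) ≤ (r*y + 1) * (s*y) := by
    have haux := stmt_1_aux r c y hy hyc hcr
    nlinarith [hrs, hs_ge, hmod1, hmod2, hy, hyc]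
  have hchain : (r*y + 1) * (s*y) ≤ (c*x) * (s*y) :=
    mul_le_mul_of_nonneg_right hx1' hsy.le
  have hlast : c * (x * (s*y)) < c * (c * (y^2*(g-1) + 1)) := by
    exact mul_lt_mul_of_pos_left hx2' hc
  nlinarith [hkey, hchain, hlast]
end

section
/- Let r, c, m, g be positive integers with c < m·r, gcd(r,c) = 1, r > 1, g − 1 ≥ 4r², and set s = ⌊((g−1)c² + 1)/r⌋. Then s − r ≥ 3c and s − r − m(g−1)(2c − mr) ≥ 3(mr − c). -/
/-- Inequalities (eq:surj1) from Corollary 5.9: with `s = ⌊((g−1)c²+1)/r⌋`,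
`s − r ≥ 3c` and `s − r − m(g−1)(2c − mr) ≥ 3(mr − c)`. -/
theorem stmt_8 (r c m g : ℤ) (hr : 0 < r) (hc : 0 < c) (hm : 0 < m) (hg : 0 < g)
    (hcmr : c < m * r) (hgcd : Int.gcd r c = 1) (hr1 : 1 < r)
    (hgr : 4 * r^2 ≤ g - 1) (s : ℤ) (hs : s = ((g - 1) * c^2 + 1) / r) :
    3 * c ≤ s - r ∧ 3 * (m * r - c) ≤ s - r - m * (g - 1) * (2 * c - m * r) := by
  set N : ℤ := (g - 1) * c^2 + 1 with hN
  have hdm := Int.mul_ediv_add_emod N r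
  have hmod0 : 0 ≤ N % r := Int.emod_nonneg N (by omega)
  have hmodlt : N % r < r := Int.emod_lt_of_pos N hr
  have hrs : r * s ≥ N - (r - 1) := by rw [hs]; omega
  have hx : 1 ≤ m * r - c := by omega
  constructor
  · nlinarith [mul_pos hr hc, sq_nonneg c, sq_nonneg (c - 1), sq_nonneg r,
      mul_le_mul_of_nonneg_right hgr (sq_nonneg c), sq_nonneg (r*c - 1)]
  · have key : r * (s - r - m * (g - 1) * (2 * c - m * r)) ≥
        (g - 1) * (m * r - c)^2 + 2 - r - r^2 := by nlinarith
    have h2 : 4 * r^2 * (m * r - c)^2 ≤ (g - 1) * (m * r - c)^2 :=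
      mul_le_mul_of_nonneg_right hgr (sq_nonneg _)
    nlinarith [mul_pos hr hx, sq_nonneg (m * r - c), mul_le_mul_of_nonneg_left hx (le_of_lt hr),
      mul_le_mul_of_nonneg_right (mul_le_mul_of_nonneg_left hx (le_of_lt hr)) (by omega : (0:ℤ) ≤ m * r - c)]
end

section
/- Let g ≥ 5 and k ≥ 2 be integers with k ≥ (g+1)/2. Then √(((k² − g + 1)/k − 1)² + 4g) + (k−1)·√(((k² − g + 1)/k)² + 4g) − (k² + g) < 2g(k−1)/((k² + g + 1)(k² − k + g + 1)). -/
set_option maxHeartbeats 1000000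


/-- Inequality (ie:dircom) from the proof of Theorem 6.2, case (ii). -/
theorem stmt_14 (g k : ℤ) (hg : 5 ≤ g) (hk2 : 2 ≤ k) (hk : (g + 1 : ℝ) / 2 ≤ k) :
    Real.sqrt ((((k : ℝ)^2 - g + 1) / k - 1)^2 + 4 * g) +
      ((k : ℝ) - 1) * Real.sqrt ((((k : ℝ)^2 - g + 1) / k)^2 + 4 * g) -
      ((k : ℝ)^2 + g) <
    2 * (g : ℝ) * (k - 1) / (((k : ℝ)^2 + g + 1) * ((k : ℝ)^2 - k + g + 1)) := by
  have hK : (2:ℝ) ≤ (k:ℝ) := by exact_mod_cast hk2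
  have hG : (5:ℝ) ≤ (g:ℝ) := by exact_mod_cast hg
  set K := (k:ℝ) with hKdef
  set G := (g:ℝ) with hGdef
  have hK0 : (0:ℝ) < K := by linarith
  have hKne : K ≠ 0 := ne_of_gt hK0
  have hA : (0:ℝ) < K^2 + G + 1 := by nlinarith
  have hB : (0:ℝ) < K^2 - K + G + 1 := by nlinarith
  set A := K^2 + G + 1 with hAdef
  set B := K^2 - K + G + 1 with hBdef
  have e1 : ((K^2 - G + 1)/K - 1)^2 + 4*G = (B^2 + 4*G*(K-1))/K^2 := by
    field_simp
    ring
  have e2 : ((K^2 - G + 1)/K)^2 + 4*G = (A^2 - 4*G)/K^2 := by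
    field_simp
    ring
  have s1 : Real.sqrt ((B^2 + 4*G*(K-1))/K^2) = Real.sqrt (B^2 + 4*G*(K-1)) / K := by
    rw [Real.sqrt_div (by nlinarith [sq_nonneg B]), Real.sqrt_sq hK0.le]
  have s2 : Real.sqrt ((A^2 - 4*G)/K^2) = Real.sqrt (A^2 - 4*G) / K := by
    rw [Real.sqrt_div (by nlinarith), Real.sqrt_sq hK0.le]
  have hq1 : (0:ℝ) < 2*G*(K-1)/B := by
    apply div_pos (by nlinarith) hB
  have hq2 : (0:ℝ) < 2*G/A := by
    apply div_pos (by nlinarith) hA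
  have b1 : Real.sqrt (B^2 + 4*G*(K-1)) < B + 2*G*(K-1)/B := by
    rw [Real.sqrt_lt' (by linarith)]
    have ht : B * (2*G*(K-1)/B) = 2*G*(K-1) := by field_simp
    have ht2 : (0:ℝ) < (2*G*(K-1)/B)^2 := pow_pos hq1 2
    have expand : (B + 2*G*(K-1)/B)^2
        = B^2 + 2*(B*(2*G*(K-1)/B)) + (2*G*(K-1)/B)^2 := by ring
    rw [expand, ht]; linarith
  have b2 : Real.sqrt (A^2 - 4*G) < A - 2*G/A := by
    have hA2 : (0:ℝ) < A - 2*G/A := by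
      rw [sub_pos, div_lt_iff₀ hA]; nlinarith
    rw [Real.sqrt_lt' hA2]
    have ht : A * (2*G/A) = 2*G := by field_simp
    have ht2 : (0:ℝ) < (2*G/A)^2 := pow_pos hq2 2
    have expand : (A - 2*G/A)^2 = A^2 - 2*(A*(2*G/A)) + (2*G/A)^2 := by ring
    rw [expand, ht]; linarith
  rw [e1, e2, s1, s2]
  have hfin : (B + 2*G*(K-1)/B)/K + (K-1) * ((A - 2*G/A)/K) - (K^2 + G)
      = 2*G*(K-1)/(A*B) := by
    field_simp
    ring
  calc Real.sqrt (B^2 + 4*G*(K-1)) / K + (K-1) * (Real.sqrt (A^2 - 4*G) / K) - (K^2 + G)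
      < (B + 2*G*(K-1)/B)/K + (K-1) * ((A - 2*G/A)/K) - (K^2 + G) := by
        gcongr
        linarith
    _ = 2*G*(K-1)/(A*B) := hfin
end
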